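/- arXiv:2302.02492 — 4 statements merged into one kernel-verified Lean document; each statement's English description precedes it below -/
import Mathlib

section
/- Let X be a torsion-free module over the polynomial ring ℂ[x] which is the union of an increasing chain of finite-dimensional ℂ-subspaces X₁ ⊆ X₂ ⊆ ⋯ such that x·Xₙ ⊆ Xₙ₊₁ for all n, and such that dim(Xₙ₊₁/Xₙ) = d for all sufficiently large n. Then for every ν ∈ ℂ, the quotient X/(x−ν)X has dimension at most d over ℂ. -/
/-!
Multiplication by `p = x - ν` is injective on the torsion-free module `X` and maps `Xₙ` into
`Xₙ₊₁`. Hence the kernel of `Xₙ₊₁ → X/pX` contains the copy `p·Xₙ` of `Xₙ`, so the image of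
`Xₙ₊₁` in `X/pX` has dimension at most `dim Xₙ₊₁ - dim Xₙ = d` for `n ≥ N`. These images
exhaust `X/pX` along an increasing chain, so `dim X/pX ≤ d`.
-/

open Module

theorem rank_le_of_monotone_of_rank_le {R M : Type*} [Ring R] [Nontrivial R] [AddCommGroup M]
    [Module R M] (S : ℕ → Submodule R M) (hS : Monotone S) (hcover : ∀ x, ∃ n, x ∈ S n)
    (d N : ℕ) (hle : ∀ n ≥ N, Module.rank R (S n) ≤ d) : Module.rank R M ≤ d := by
  classical
  refine rank_le fun s hs => ?_
  choose m hm using hcover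
  obtain ⟨n, hn⟩ := Finset.exists_le (insert N (s.image m))
  have hsub : ∀ x : s, (x : M) ∈ S n := fun x =>
    hS (hn _ (Finset.mem_insert_of_mem (Finset.mem_image_of_mem m x.2))) (hm x)
  have hli : LinearIndependent R fun x : s => (⟨x, hsub x⟩ : S n) :=
    LinearIndependent.of_comp (S n).subtype hs
  simpa using hli.cardinal_le_rank.trans (hle n (hn _ (Finset.mem_insert_self _ _)))

theorem finrank_map_mkQ_range_add_finrank_le {K V : Type*} [DivisionRing K] [AddCommGroup V]
    [Module K V] {T : V →ₗ[K] V} (hT : Function.Injective T) {U W : Submodule K V}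
    [FiniteDimensional K W] (hUW : U.map T ≤ W) :
    finrank K (W.map (LinearMap.range T).mkQ) + finrank K U ≤ finrank K W := by
  set f := (LinearMap.range T).mkQ ∘ₗ W.subtype
  have hrange : LinearMap.range f = W.map (LinearMap.range T).mkQ := by
    rw [LinearMap.range_comp, Submodule.range_subtype]
  have hker : (U.map T).comap W.subtype ≤ LinearMap.ker f := by
    rintro w ⟨u, -, hu⟩
    simpa [f] using ⟨u, hu⟩
  have hU : finrank K U = finrank K ((U.map T).comap W.subtype) := by
    rw [(Submodule.comapSubtypeEquivOfLe hUW).finrank_eq,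
      (Submodule.equivMapOfInjective T hT U).finrank_eq]
  rw [← hrange, hU, ← f.finrank_range_add_finrank_ker]
  gcongr
  exact Submodule.finrank_mono hker

theorem rank_quotient_range_le_of_filtration {K V : Type*} [DivisionRing K] [AddCommGroup V]
    [Module K V] {T : V →ₗ[K] V} (hT : Function.Injective T) (F : ℕ → Submodule K V)
    (hmono : Monotone F) [∀ n, FiniteDimensional K (F n)] (hcover : ∀ v, ∃ n, v ∈ F n)
    (hshift : ∀ n, (F n).map T ≤ F (n + 1)) (d N : ℕ)
    (hdim : ∀ n ≥ N, finrank K (F (n + 1)) = finrank K (F n) + d) :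
    Module.rank K (V ⧸ LinearMap.range T) ≤ d := by
  refine rank_le_of_monotone_of_rank_le (fun n => (F (n + 1)).map (LinearMap.range T).mkQ)
    (fun m n hmn => Submodule.map_mono (hmono (Nat.succ_le_succ hmn))) ?_ d N fun n hn => ?_
  · rintro ⟨v⟩
    obtain ⟨n, hv⟩ := hcover v
    exact ⟨n, v, hmono n.le_succ hv, rfl⟩
  · have hle := finrank_map_mkQ_range_add_finrank_le (W := F (n + 1)) hT (hshift n)
    rw [hdim n hn] at hle
    rw [← finrank_eq_rank]
    exact_mod_cast (by omega : finrank K ((F (n + 1)).map (LinearMap.range T).mkQ) ≤ d)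

/-- A torsion-free ℂ[x]-module with a filtration by finite-dimensional
subspaces whose dimension eventually grows by exactly `d` at each step has
`dim X/(x-ν)X ≤ d` for every ν ∈ ℂ. -/
theorem stmt0 (X : Type*) [AddCommGroup X] [Module ℂ X]
    [Module (Polynomial ℂ) X] [IsScalarTower ℂ (Polynomial ℂ) X]
    (htf : ∀ (p : Polynomial ℂ) (v : X), p • v = 0 → p = 0 ∨ v = 0)
    (F : ℕ → Submodule ℂ X) (hmono : Monotone F)
    (hfd : ∀ n, FiniteDimensional ℂ (F n))
    (hunion : ∀ v : X, ∃ n, v ∈ F n)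
    (hx : ∀ n, ∀ v ∈ F n, (Polynomial.X : Polynomial ℂ) • v ∈ F (n + 1))
    (d N : ℕ)
    (hdim : ∀ n ≥ N, Module.finrank ℂ (F (n + 1)) = Module.finrank ℂ (F n) + d)
    (ν : ℂ) :
    Module.rank ℂ
      (X ⧸ Submodule.span ℂ
        {w : X | ∃ v : X, w = ((Polynomial.X : Polynomial ℂ) - Polynomial.C ν) • v})
      ≤ (d : Cardinal) := by
  set T : X →ₗ[ℂ] X := DistribSMul.toLinearMap ℂ X (Polynomial.X - Polynomial.C ν)
  have hspan : Submodule.span ℂ {w : X | ∃ v : X, w = T v} = LinearMap.range T := by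
    rw [← Submodule.span_eq (LinearMap.range T)]
    congr 1
    ext w
    exact exists_congr fun v => eq_comm
  have hT : Function.Injective T := by
    refine (injective_iff_map_eq_zero T).2 fun v hv => ?_
    exact (htf _ v hv).resolve_left (Polynomial.X_sub_C_ne_zero ν)
  have hshift : ∀ n, (F n).map T ≤ F (n + 1) := by
    rintro n _ ⟨v, hv, rfl⟩
    have hC : Polynomial.C ν • v = ν • v := algebraMap_smul (Polynomial ℂ) ν v
    change (Polynomial.X - Polynomial.C ν) • v ∈ F (n + 1)
    rw [sub_smul, hC]
    exact sub_mem (hx n v hv) (Submodule.smul_mem _ ν (hmono n.le_succ hv))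
  exact hspan ▸ rank_quotient_range_le_of_filtration hT F hmono hunion hshift d N hdim
end

section
/- In ℤ[q, q⁻¹] with χₙ = Σ_{j=0}^{n} q^{n−2j}, write the product χₐ·χ_b·χ_c (a, b, c natural numbers) uniquely as an ℤ-linear combination of the elements χ_z, z ≥ 0. Then the coefficient of χ₀ equals 1 if a + b + c is even and the triangle inequalities a ≤ b + c, b ≤ a + c, c ≤ a + b all hold, and equals 0 otherwise. -/
/-- The character of the (n+1)-dimensional irreducible SU(2)-representation,
as a Laurent polynomial: χₙ = Σ_{j=0}^{n} q^{n-2j}. -/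
noncomputable def chi (n : ℕ) : LaurentPolynomial ℤ :=
  ∑ j ∈ Finset.range (n + 1), LaurentPolynomial.T ((n : ℤ) - 2 * j)

/-! The functional `p ↦ coeff₁ ((q - q⁻¹) p)` sends `χ_z` to `δ_{z,0}` by the Weyl character
formula `(q - q⁻¹) χₙ = q^(n+1) - q^(-(n+1))`, so it reads off the coefficient of `χ₀` from any
expansion. Cancelling `q - q⁻¹` in the same formula gives the Clebsch–Gordan rule
`χₘ χₙ = ∑_{k ≤ min m n} χ_{m+n-2k}`. Hence the `χ₀`-coefficient of `χₘ χₙ` is `δ_{m,n}`, and that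
of `χₐ χ_b χ_c` counts the `k ≤ min a b` with `a + b - 2k = c`: there is one exactly when
`a + b + c` is even and the triangle inequalities hold. -/

open LaurentPolynomial Finset

noncomputable def weylDenominator : ℤ[T;T⁻¹] := T 1 - T (-1)

lemma weylDenominator_ne_zero : weylDenominator ≠ 0 := by
  intro h
  have := congrArg (fun p : ℤ[T;T⁻¹] => p.coeff 1) h
  simp [weylDenominator, AddMonoidAlgebra.coeff_sub] at this

lemma weylDenominator_mul_chi (n : ℕ) :
    weylDenominator * chi n = T (n + 1) - T (-(n + 1)) := by
  have telescope := sum_range_sub' (fun j : ℕ => (T ((n : ℤ) + 1 - 2 * j) : ℤ[T;T⁻¹])) (n + 1)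
  rw [weylDenominator, chi, mul_sum]
  convert telescope using 1
  · refine sum_congr rfl fun j _ => ?_
    rw [sub_mul, ← T_add, ← T_add]
    push_cast
    ring_nf
  · push_cast
    ring_nf

theorem chi_mul_chi (m n : ℕ) :
    chi m * chi n = ∑ k ∈ range (min m n + 1), chi (m + n - 2 * k) := by
  wlog hnm : n ≤ m generalizing m n
  · rw [mul_comm, this n m (by omega), min_comm, add_comm n m]
  rw [min_eq_right hnm]
  apply mul_left_cancel₀ weylDenominator_ne_zero
  rw [← mul_assoc, weylDenominator_mul_chi, mul_sum]
  simp_rw [weylDenominator_mul_chi]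
  rw [chi, sub_mul, mul_sum, mul_sum, sum_sub_distrib]
  congr 1
  on_goal 2 => rw [← sum_range_reflect _ (n + 1)]
  all_goals
    refine sum_congr rfl fun k hk => ?_
    rw [← T_add]
    congr 1
    have := mem_range.mp hk
    omega

noncomputable def chiZeroCoeff : ℤ[T;T⁻¹] →+ ℤ :=
  (Finsupp.applyAddHom (1 : ℤ)).comp
    (AddMonoidAlgebra.coeffAddEquiv.toAddMonoidHom.comp (AddMonoidHom.mulLeft weylDenominator))

lemma chiZeroCoeff_apply (p : ℤ[T;T⁻¹]) :
    chiZeroCoeff p = (weylDenominator * p).coeff 1 := rfl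

lemma chiZeroCoeff_chi (n : ℕ) : chiZeroCoeff (chi n) = if n = 0 then 1 else 0 := by
  rw [chiZeroCoeff_apply, weylDenominator_mul_chi, AddMonoidAlgebra.coeff_sub, Finsupp.sub_apply,
    T_apply, T_apply]
  split_ifs <;> omega

lemma chiZeroCoeff_finsuppSum_smul_chi (co : ℕ →₀ ℤ) :
    chiZeroCoeff (co.sum fun z m => m • chi z) = co 0 := by
  simp only [map_finsuppSum, map_zsmul, chiZeroCoeff_chi, smul_eq_mul, mul_ite, mul_one, mul_zero,
    Finsupp.sum_ite_self_eq']

lemma sum_range_boole_two_mul_add (n c m : ℕ) :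
    (∑ k ∈ range n, if 2 * k + c = m then (1 : ℤ) else 0) =
      if c ≤ m ∧ Even (m + c) ∧ m < 2 * n + c then 1 else 0 := by
  induction n with
  | zero => simp only [range_zero, sum_empty]; split_ifs <;> omega
  | succ n ih =>
    rw [sum_range_succ, ih]
    simp only [Nat.even_iff]
    split_ifs <;> omega

lemma sum_range_min_boole_sub_two_mul (a b c : ℕ) :
    (∑ k ∈ range (min a b + 1), if a + b - 2 * k = c then (1 : ℤ) else 0) =
      if Even (a + b + c) ∧ a ≤ b + c ∧ b ≤ a + c ∧ c ≤ a + b then 1 else 0 := by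
  calc (∑ k ∈ range (min a b + 1), if a + b - 2 * k = c then (1 : ℤ) else 0)
      = ∑ k ∈ range (min a b + 1), if 2 * k + c = a + b then (1 : ℤ) else 0 :=
        sum_congr rfl fun k hk => if_congr (by have := mem_range.mp hk; omega) rfl rfl
    _ = _ := by
        rw [sum_range_boole_two_mul_add]
        simp only [Nat.even_iff]
        split_ifs <;> omega

lemma chiZeroCoeff_chi_mul_chi (m n : ℕ) :
    chiZeroCoeff (chi m * chi n) = if m = n then 1 else 0 := by
  rw [chi_mul_chi, map_sum]
  simp only [chiZeroCoeff_chi]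
  rw [sum_range_min_boole_sub_two_mul]
  simp only [Nat.even_iff]
  split_ifs <;> omega

lemma chiZeroCoeff_chi_mul_chi_mul_chi (a b c : ℕ) :
    chiZeroCoeff (chi a * chi b * chi c) =
      if Even (a + b + c) ∧ a ≤ b + c ∧ b ≤ a + c ∧ c ≤ a + b then 1 else 0 := by
  rw [chi_mul_chi, sum_mul, map_sum]
  simp only [chiZeroCoeff_chi_mul_chi]
  exact sum_range_min_boole_sub_two_mul a b c

/-- In any expansion of χₐ·χ_b·χ_c as a ℤ-linear combination of the
basis elements χ_z, the coefficient of χ₀ is 1 if a+b+c is even and a, b, c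
satisfy the triangle inequalities, and 0 otherwise. -/
theorem stmt7 (a b c : ℕ) (co : ℕ →₀ ℤ)
    (hco : chi a * chi b * chi c = co.sum fun z m => m • chi z) :
    co 0 = if Even (a + b + c) ∧ a ≤ b + c ∧ b ≤ a + c ∧ c ≤ a + b then 1 else 0 := by
  rw [← chiZeroCoeff_finsuppSum_smul_chi, ← hco, chiZeroCoeff_chi_mul_chi_mul_chi]
end

section
/- For all integers x ≥ y ≥ 0, the sum of (a+1)(b+1) over all pairs of natural numbers (a, b) satisfying a + b ≡ x + y (mod 2), |a − b| ≤ x − y, and x − y ≤ a + b ≤ x + y, equals (x−y+1)(x+y+3)(x+2)(y+1)/6. -/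
/-!
In the coordinates `u = (a + b - (x - y)) / 2` and `v = (a - b + (x - y)) / 2` the constraints on
`(a, b)` say exactly that `(u, v)` ranges over the rectangle `[0, y] × [0, x - y]`, with inverse
`(a, b) = (u + v, u + (x - y) - v)`. The sum thereby becomes the double sum of the quadratic
polynomial `(u + v + 1) (u + (x - y) - v + 1)` over a rectangle, which is evaluated by summing
powers of consecutive integers.
-/

open Finset

theorem sum_range_add_mul_sub (c e : ℚ) (n : ℕ) :
    ∑ v ∈ range n, (c + v) * (e - v) =
      n * c * e + (e - c) * (n * (n - 1)) / 2 - (n - 1) * n * (2 * n - 1) / 6 := by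
  induction n with
  | zero => simp
  | succ n ih => rw [sum_range_succ, ih]; push_cast; ring

theorem sum_range_sum_range_add_mul_sub (m d : ℕ) :
    ∑ u ∈ range m, ∑ v ∈ range (d + 1), ((u : ℚ) + v + 1) * (u + d - v + 1) =
      (d + 1) * (2 * m + d + 1) * (m + d + 1) * m / 6 := by
  induction m with
  | zero => simp
  | succ m ih =>
    have hlast : ∑ v ∈ range (d + 1), ((m : ℚ) + v + 1) * (m + d - v + 1) =
        ∑ v ∈ range (d + 1), ((m + 1 : ℚ) + v) * ((m + d + 1 : ℚ) - v) :=
      sum_congr rfl fun _ _ => by ring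
    rw [sum_range_succ, ih, hlast, sum_range_add_mul_sub]
    push_cast
    ring

theorem sum_sum_ite_region_eq_sum_rectangle {M : Type*} [AddCommMonoid M] (x y : ℕ)
    (hxy : y ≤ x) (g : ℕ → ℕ → M) :
    (∑ a ∈ range (x + y + 1), ∑ b ∈ range (x + y + 1),
        if ((a + b) % 2 = (x + y) % 2 ∧ (a : ℤ) - b ≤ (x : ℤ) - y ∧
            (b : ℤ) - a ≤ (x : ℤ) - y ∧ ((x : ℤ) - y) ≤ a + b ∧ (a : ℤ) + b ≤ x + y)
          then g a b else 0)
      = ∑ u ∈ range (y + 1), ∑ v ∈ range (x - y + 1), g (u + v) (u + (x - y - v)) := by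
  rw [← sum_product', ← sum_product', ← sum_filter]
  refine sum_nbij' (fun p => ((p.1 + p.2 - (x - y)) / 2, (p.1 + (x - y) - p.2) / 2))
    (fun q => (q.1 + q.2, q.1 + (x - y - q.2))) ?_ ?_ ?_ ?_ ?_
  all_goals simp only [mem_filter, mem_product, mem_range, Prod.forall, Prod.mk.injEq]
  · intros; omega
  · intros; omega
  · intros; omega
  · intros; omega
  · intro a b h
    congr <;> omega

/-- The sum of (a+1)(b+1) over pairs (a,b) of naturals with
a+b ≡ x+y (mod 2), |a-b| ≤ x-y and x-y ≤ a+b ≤ x+y equals the Weyl dimension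
(x-y+1)(x+y+3)(x+2)(y+1)/6 of V_{(x,y)}. -/
theorem stmt11 (x y : ℕ) (hxy : y ≤ x) :
    (∑ a ∈ Finset.range (x + y + 1), ∑ b ∈ Finset.range (x + y + 1),
        if ((a + b) % 2 = (x + y) % 2 ∧ (a : ℤ) - b ≤ (x : ℤ) - y ∧
            (b : ℤ) - a ≤ (x : ℤ) - y ∧ ((x : ℤ) - y) ≤ a + b ∧ (a : ℤ) + b ≤ x + y)
          then ((a : ℚ) + 1) * ((b : ℚ) + 1) else 0)
      = ((x : ℚ) - y + 1) * (x + y + 3) * (x + 2) * (y + 1) / 6 := by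
  rw [sum_sum_ite_region_eq_sum_rectangle x y hxy fun a b => ((a : ℚ) + 1) * ((b : ℚ) + 1)]
  have hcast : ∀ u, ∀ v ∈ range (x - y + 1),
      ((↑(u + v) : ℚ) + 1) * ((↑(u + (x - y - v)) : ℚ) + 1) =
        ((u : ℚ) + v + 1) * (u + ↑(x - y) - v + 1) := by
    intro u v hv
    push_cast [Nat.cast_sub (Nat.lt_succ_iff.mp (mem_range.mp hv) : v ≤ x - y)]
    ring
  simp_rw [fun u => sum_congr rfl (hcast u), sum_range_sum_range_add_mul_sub, Nat.cast_sub hxy]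
  push_cast
  ring
end

section
/- Let a, b, c be natural numbers that are sides of a triangle (each at most the sum of the other two) with a + b + c even. In ℤ[q,q⁻¹] with χₙ = Σ_{j=0}^{n} q^{n−2j}, for every natural number z with z ≡ a+b+c (mod 2), the coefficient of χ₀ in the expansion of χₐ·χ_b·χ_c·χ_z is nonzero if and only if z ≤ a + b + c, z ≥ a − b − c, z ≥ b − a − c, and z ≥ c − a − b. -/
open LaurentPolynomial Finset

noncomputable def del : LaurentPolynomial ℤ := T 1 - T (-1)

lemma del_ne_zero : del ≠ 0 := by
  intro h
  rw [del, sub_eq_zero] at h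
  have h2 : (Finsupp.single (1:ℤ) (1:ℤ)) = Finsupp.single (-1:ℤ) 1 := congrArg AddMonoidAlgebra.coeff h
  have := Finsupp.single_left_injective (α := ℤ) (one_ne_zero (α := ℤ)) h2
  omega

lemma del_mul_chi (n : ℕ) : del * chi n = T ((n:ℤ)+1) - T (-((n:ℤ)+1)) := by
  have key : ∀ j : ℕ, del * T ((n : ℤ) - 2 * j)
      = T ((n:ℤ)+1-2*j) - T ((n:ℤ)+1-2*(j+1)) := by
    intro j
    rw [del, sub_mul, ← T_add, ← T_add]
    ring_nf
  rw [chi, Finset.mul_sum]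
  calc (∑ j ∈ Finset.range (n+1), del * T ((n : ℤ) - 2 * j))
      = ∑ j ∈ Finset.range (n+1), (T ((n:ℤ)+1-2*j) - T ((n:ℤ)+1-2*(j+1))) := by
        exact Finset.sum_congr rfl fun j _ => key j
    _ = T ((n:ℤ)+1-2*(0:ℕ)) - T ((n:ℤ)+1-2*(n+1:ℕ)) := by
        exact Finset.sum_range_sub' (fun j => T ((n:ℤ)+1-2*j)) (n+1)
    _ = T ((n:ℤ)+1) - T (-((n:ℤ)+1)) := by push_cast; ring_nf

lemma clebsch_aux {m n : ℕ} (h : m ≤ n) :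
    chi m * chi n = ∑ j ∈ Finset.range (m + 1), chi (m + n - 2*j) := by
  apply mul_left_cancel₀ del_ne_zero
  rw [Finset.mul_sum]
  have rhs : ∀ j ∈ Finset.range (m+1), del * chi (m + n - 2*j)
      = T ((m:ℤ)+n+1-2*j) - T (2*j-(m:ℤ)-n-1) := by
    intro j hj
    rw [Finset.mem_range] at hj
    rw [del_mul_chi]
    have : ((m + n - 2*j : ℕ) : ℤ) = (m:ℤ) + n - 2*j := by omega
    rw [this]
    ring_nf
  rw [Finset.sum_congr rfl rhs, ← mul_assoc, mul_comm del (chi m), mul_assoc,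
    del_mul_chi, chi, Finset.sum_mul]
  have lhs : ∀ i ∈ Finset.range (m+1), T ((m:ℤ) - 2*i) * ((T ((n:ℤ)+1) : LaurentPolynomial ℤ) - T (-((n:ℤ)+1)))
      = T ((m:ℤ)+n+1-2*i) - T ((m:ℤ)-n-1-2*i) := by
    intro i _
    rw [mul_sub, ← T_add, ← T_add]
    ring_nf
  rw [Finset.sum_congr rfl lhs]
  rw [Finset.sum_sub_distrib, Finset.sum_sub_distrib]
  congr 1
  rw [← Finset.sum_range_reflect (fun j => T ((m:ℤ)-n-1-2*j)) (m+1)]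
  apply Finset.sum_congr rfl
  intro j hj
  rw [Finset.mem_range] at hj
  have : ((m + 1 - 1 - j : ℕ) : ℤ) = (m:ℤ) - j := by omega
  rw [this]
  ring_nf

lemma clebsch (m n : ℕ) :
    chi m * chi n = ∑ j ∈ Finset.range (min m n + 1), chi (m + n - 2*j) := by
  rcases le_total m n with h | h
  · rw [min_eq_left h]; exact clebsch_aux h
  · rw [min_eq_right h, mul_comm]
    rw [clebsch_aux h]
    exact Finset.sum_congr rfl fun j _ => by rw [Nat.add_comm n m]

noncomputable def phi : LaurentPolynomial ℤ →+ ℤ :=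
  (Finsupp.applyAddHom (0:ℤ) - Finsupp.applyAddHom (2:ℤ) : (ℤ →₀ ℤ) →+ ℤ).comp
    (AddMonoidAlgebra.coeffAddEquiv : LaurentPolynomial ℤ ≃+ (ℤ →₀ ℤ)).toAddMonoidHom

lemma phi_T (k : ℤ) : phi (T k) = (if k = 0 then 1 else 0) - (if k = 2 then 1 else 0) := by
  show (T k : LaurentPolynomial ℤ).coeff 0 - (T k : LaurentPolynomial ℤ).coeff 2 = _
  show (Finsupp.single k (1:ℤ)) 0 - (Finsupp.single k (1:ℤ)) 2 = _
  rw [Finsupp.single_apply, Finsupp.single_apply]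

lemma phi_chi (w : ℕ) : phi (chi w) = if w = 0 then 1 else 0 := by
  rw [chi, map_sum]
  set f : ℕ → ℤ := fun j => if (w:ℤ) - 2*j = 0 then (1:ℤ) else 0 with hf
  have key : ∀ j ∈ Finset.range (w+1), phi (T ((w:ℤ) - 2*j)) = f j - f (j+1) := by
    intro j _
    rw [phi_T, hf]
    simp only []
    congr 1
    exact if_congr (by push_cast; omega) rfl rfl
  rw [Finset.sum_congr rfl key, Finset.sum_range_sub' f (w+1), hf]
  simp only []
  push_cast
  split_ifs <;> omega

lemma phi_chi_mul (x y : ℕ) : phi (chi x * chi y) = if x = y then 1 else 0 := by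
  rw [clebsch, map_sum]
  have key : ∀ j ∈ Finset.range (min x y + 1), phi (chi (x + y - 2*j))
      = if x + y - 2*j = 0 then (1:ℤ) else 0 := fun j _ => phi_chi _
  rw [Finset.sum_congr rfl key, Finset.sum_boole]
  by_cases hxy : x = y
  · subst hxy
    have : (Finset.range (min x x + 1)).filter (fun j => x + x - 2*j = 0) = {x} := by
      ext j
      simp only [Finset.mem_filter, Finset.mem_range, Finset.mem_singleton]
      omega
    rw [this, if_pos rfl]
    simp
  · have : (Finset.range (min x y + 1)).filter (fun j => x + y - 2*j = 0) = ∅ := by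
      ext j
      simp only [Finset.mem_filter, Finset.mem_range, Finset.notMem_empty, iff_false,
        not_and]
      intro h1
      omega
    rw [this, if_neg hxy]
    simp

set_option maxHeartbeats 1000000 in
/-- for a, b, c sides of a triangle with even perimeter and any
natural z of the same parity as a+b+c, the coefficient of χ₀ in the basis
expansion of χₐ·χ_b·χ_c·χ_z is nonzero iff z ≤ a+b+c, z ≥ a-b-c, z ≥ b-a-c,
and z ≥ c-a-b. -/
theorem stmt19 (a b c : ℕ) (hab : a ≤ b + c) (hbc : b ≤ a + c) (hca : c ≤ a + b)
    (heven : Even (a + b + c)) (z : ℕ) (hpar : z % 2 = (a + b + c) % 2)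
    (co : ℕ →₀ ℤ)
    (hco : chi a * chi b * chi c * chi z = co.sum fun w m => m • chi w) :
    co 0 ≠ 0 ↔
      (z ≤ a + b + c ∧ (a : ℤ) - b - c ≤ z ∧ (b : ℤ) - a - c ≤ z ∧
        (c : ℤ) - a - b ≤ z) := by
  -- Step 1: co 0 = phi of the product
  have hphi_sum : phi (chi a * chi b * chi c * chi z) = co 0 := by
    rw [hco, map_finsuppSum]
    have : ∀ w ∈ co.support, phi (co w • chi w) = if w = 0 then co w else 0 := by
      intro w _
      rw [map_zsmul, phi_chi]
      split_ifs <;> simp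
    rw [Finsupp.sum, Finset.sum_congr rfl this, Finset.sum_ite_eq' co.support 0 (fun w => co w)]
    split_ifs with h
    · rfl
    · rw [Finsupp.notMem_support_iff] at h
      rw [h]
  -- Step 2: phi of the product as a double count
  have hprod : chi a * chi b * chi c * chi z = (chi a * chi b) * (chi c * chi z) := by ring
  have hcount : phi (chi a * chi b * chi c * chi z)
      = ((Finset.range (min a b + 1) ×ˢ Finset.range (min c z + 1)).filter
          (fun p => a + b - 2*p.1 = c + z - 2*p.2)).card := by
    rw [hprod, clebsch a b, clebsch c z, Finset.sum_mul_sum, map_sum]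
    have : ∀ j ∈ Finset.range (min a b + 1),
        phi (∑ k ∈ Finset.range (min c z + 1), chi (a + b - 2*j) * chi (c + z - 2*k))
        = ∑ k ∈ Finset.range (min c z + 1),
            if a + b - 2*j = c + z - 2*k then (1:ℤ) else 0 := by
      intro j _
      rw [map_sum]
      exact Finset.sum_congr rfl fun k _ => phi_chi_mul _ _
    rw [Finset.sum_congr rfl this, ← Finset.sum_product']
    rw [Finset.sum_boole]
  rw [← hphi_sum, hcount]
  -- Step 3: translate card ≠ 0 into the inequalities
  obtain ⟨t, ht⟩ := heven
  rw [ne_eq, Nat.cast_eq_zero, Finset.card_eq_zero, ← ne_eq,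
    ← Finset.nonempty_iff_ne_empty]
  constructor
  · rintro ⟨⟨j, k⟩, hp⟩
    simp only [Finset.mem_filter, Finset.mem_product, Finset.mem_range] at hp
    obtain ⟨⟨hj, hk⟩, heq⟩ := hp
    refine ⟨by omega, by omega, by omega, by omega⟩
  · rintro ⟨h1, h2, h3, h4⟩
    have h2' : a ≤ b + c + z := by omega
    have h3' : b ≤ a + c + z := by omega
    have h4' : c ≤ a + b + z := by omega
    set d : ℕ := max ((a - b) + (b - a)) ((c - z) + (z - c)) with hd
    refine ⟨((a + b - d)/2, (c + z - d)/2), ?_⟩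
    simp only [Finset.mem_filter, Finset.mem_product, Finset.mem_range]
    refine ⟨⟨by omega, by omega⟩, by omega⟩
end
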